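/- arXiv:1105.2648 — 3 statements merged into one kernel-verified Lean document; each statement's English description precedes it below -/
import Mathlib

section
/- Let R and S be nonempty open connected subsets of the Riemann sphere ℂ∞, and assume that the set of nonconstant holomorphic maps from R to S is finite. Let X ⊆ ℂᵐ be a nonempty open connected set, and let F : R × X → S be a holomorphic map such that for some x₀ ∈ X the map R ∋ z ↦ F(z, x₀) is nonconstant. Then F is independent of X, i.e., F(z, x) = F(z, x′) for all z ∈ R and all x, x′ ∈ X. -/
open Set OnePoint
open scoped Classical

/-! We model the Riemann sphere `ℂ∞` as the one-point compactification `OnePoint ℂ` of `ℂ`,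
and define holomorphy of maps into (and between open subsets of) `OnePoint ℂ` by reading
the maps in the two standard charts: the identity chart on `ℂ` and the inversion chart
at `∞`. -/

/-- Reads a point of the Riemann sphere in the identity chart: `z ↦ z` on `ℂ`
(with junk value `0` at `∞`). -/
noncomputable def spDown : OnePoint ℂ → ℂ := fun z => OnePoint.elim z 0 id

/-- The inversion `z ↦ 1/z` of the Riemann sphere, interchanging `0` and `∞`. -/
noncomputable def spInv : OnePoint ℂ → OnePoint ℂ :=
  fun z => OnePoint.elim z ((0 : ℂ) : OnePoint ℂ)
    (fun w => if w = 0 then (∞ : OnePoint ℂ) else ((w⁻¹ : ℂ) : OnePoint ℂ))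

/-- A map `h` from a complex normed space into the Riemann sphere is holomorphic at `a` if it
is continuous at `a` and, read in the standard chart around the value `h a` (the identity
chart if `h a ≠ ∞`, the inversion chart if `h a = ∞`), it is analytic at `a`. -/
def SphHoloAt {E : Type*} [NormedAddCommGroup E] [NormedSpace ℂ E]
    (h : E → OnePoint ℂ) (a : E) : Prop :=
  ContinuousAt h a ∧
    ((h a ≠ ∞ ∧ AnalyticAt ℂ (fun z => spDown (h z)) a) ∨
      (h a = ∞ ∧ AnalyticAt ℂ (fun z => spDown (spInv (h z))) a))

/-- Holomorphy on a set, for maps from a complex normed space into the Riemann sphere. -/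
def SphHoloOn {E : Type*} [NormedAddCommGroup E] [NormedSpace ℂ E]
    (h : E → OnePoint ℂ) (U : Set E) : Prop :=
  ∀ a ∈ U, SphHoloAt h a

/-- The standard local parametrization of the Riemann sphere at `p`: the identity chart if
`p ≠ ∞` and the inversion chart if `p = ∞`; it maps `sphChartPt p` to `p`. -/
noncomputable def sphChart (p : OnePoint ℂ) : ℂ → OnePoint ℂ :=
  if p = ∞ then (fun z => spInv ((z : ℂ) : OnePoint ℂ)) else (fun z => ((z : ℂ) : OnePoint ℂ))

/-- The coordinate of `p` in the standard chart at `p`. -/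
noncomputable def sphChartPt (p : OnePoint ℂ) : ℂ := if p = ∞ then 0 else spDown p

/-- Holomorphy on a set `U`, for a map of one Riemann-sphere variable: at each `p ∈ U` the
map, read in the standard parametrization at `p`, is holomorphic at the coordinate of `p`. -/
def SphHoloOnS (f : OnePoint ℂ → OnePoint ℂ) (U : Set (OnePoint ℂ)) : Prop :=
  ∀ p ∈ U, SphHoloAt (fun z : ℂ => f (sphChart p z)) (sphChartPt p)

/-- Holomorphy on a set `U`, for a map of several Riemann-sphere variables: at each `p ∈ U`
the map, read in the product of the standard parametrizations at the coordinates of `p`, is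
holomorphic at the coordinates of `p`. -/
def SphHoloOnProd {n : ℕ} (f : (Fin n → OnePoint ℂ) → OnePoint ℂ)
    (U : Set (Fin n → OnePoint ℂ)) : Prop :=
  ∀ p ∈ U, SphHoloAt (fun z : Fin n → ℂ => f (fun i => sphChart (p i) (z i)))
      (fun i => sphChartPt (p i))

/-- Holomorphy for a map on a product `R × X`, where `R` is an open subset of the Riemann
sphere and `X` is an open subset of a complex normed space: at each point of `R × X` the map,
read in the standard parametrization of the sphere factor, is holomorphic. -/
def SphHoloOnMix {E : Type*} [NormedAddCommGroup E] [NormedSpace ℂ E]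
    (F : OnePoint ℂ × E → OnePoint ℂ) (R : Set (OnePoint ℂ)) (X : Set E) : Prop :=
  ∀ p ∈ R, ∀ x ∈ X,
    SphHoloAt (fun q : ℂ × E => F (sphChart p q.1, q.2)) (sphChartPt p, x)


/-! The slice map `x ↦ F(·, x)` is continuous for the topology of pointwise convergence on `R`.
Fix `z₁, z₂ ∈ R` with `F(z₁, x₀) ≠ F(z₂, x₀)`. The slices separating `z₁` and `z₂` form an open
set of functions, all of whose slices are nonconstant holomorphic maps `R → S`, so only finitely
many of them occur; since points of a T₁ space are isolated in a finite set, the fibre of the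
slice map over `F(·, x₀)` is open as well as closed, hence all of the connected set `X`. -/

theorem Continuous.apply_eq_of_finite_range_inter {X Z : Type*} [TopologicalSpace X]
    [PreconnectedSpace X] [TopologicalSpace Z] [T1Space Z] {φ : X → Z} (hφ : Continuous φ)
    {W : Set Z} (hW : IsOpen W) (hfin : (range φ ∩ W).Finite) {x₀ : X} (hx₀ : φ x₀ ∈ W)
    (x : X) : φ x = φ x₀ := by
  have hfibre : φ ⁻¹' (W \ ((range φ ∩ W) \ {φ x₀})) = φ ⁻¹' {φ x₀} := by
    ext y
    simp only [mem_preimage, mem_sdiff, mem_inter_iff, mem_range_self, true_and,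
      mem_singleton_iff]
    constructor
    · rintro ⟨hyW, hy⟩
      exact not_not.mp fun hne => hy ⟨hyW, hne⟩
    · rintro hy
      exact ⟨hy ▸ hx₀, fun h => h.2 hy⟩
  have hclopen : IsClopen (φ ⁻¹' {φ x₀}) :=
    ⟨isClosed_singleton.preimage hφ, hfibre ▸ (hW.sdiff (hfin.sdiff).isClosed).preimage hφ⟩
  have hx : x ∈ φ ⁻¹' {φ x₀} := hclopen.eq_univ ⟨x₀, rfl⟩ ▸ mem_univ x
  exact hx

lemma sphChart_sphChartPt (p : OnePoint ℂ) : sphChart p (sphChartPt p) = p := by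
  cases p with
  | infty => simp [sphChart, sphChartPt, spInv]
  | coe w => simp [sphChart, sphChartPt, spDown]

lemma SphHoloAt.comp_analyticAt {E E' : Type*} [NormedAddCommGroup E] [NormedSpace ℂ E]
    [NormedAddCommGroup E'] [NormedSpace ℂ E'] {h : E' → OnePoint ℂ} {f : E → E'} {a : E}
    (hh : SphHoloAt h (f a)) (hf : AnalyticAt ℂ f a) : SphHoloAt (h ∘ f) a :=
  ⟨hh.1.comp hf.continuousAt,
    hh.2.imp (And.imp_right fun han => han.comp hf) (And.imp_right fun han => han.comp hf)⟩

section SphHoloOnMix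

variable {E : Type*} [NormedAddCommGroup E] [NormedSpace ℂ E]
  {F : OnePoint ℂ × E → OnePoint ℂ} {R : Set (OnePoint ℂ)} {X : Set E}

lemma SphHoloOnMix.sphHoloOnS_left (hF : SphHoloOnMix F R X) {x : E} (hx : x ∈ X) :
    SphHoloOnS (fun z => F (z, x)) R := fun p hp =>
  (hF p hp x hx).comp_analyticAt (f := fun z : ℂ => (z, x)) (analyticAt_id.prod analyticAt_const)

lemma SphHoloOnMix.continuousOn_right (hF : SphHoloOnMix F R X) {z : OnePoint ℂ} (hz : z ∈ R) :
    ContinuousOn (fun x => F (z, x)) X := fun x hx => by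
  have h := (hF z hz x hx).1.comp (f := fun y : E => (sphChartPt z, y))
    (continuous_const.prodMk continuous_id).continuousAt
  simp only [Function.comp_def, sphChart_sphChartPt] at h
  exact h.continuousWithinAt

end SphHoloOnMix

theorem rigidity_lemma_general (m : ℕ) (R S : Set (OnePoint ℂ))
    (hfin : {f : ↥R → OnePoint ℂ | ∃ g : OnePoint ℂ → OnePoint ℂ,
        SphHoloOnS g R ∧ MapsTo g R S ∧ (¬ ∃ c, ∀ z ∈ R, g z = c) ∧
        ∀ x : ↥R, f x = g x}.Finite)
    (X : Set (Fin m → ℂ)) (hXc : IsConnected X)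
    (F : OnePoint ℂ × (Fin m → ℂ) → OnePoint ℂ)
    (hF : SphHoloOnMix F R X)
    (hmaps : ∀ z ∈ R, ∀ x ∈ X, F (z, x) ∈ S)
    (x₀ : Fin m → ℂ) (hx₀ : x₀ ∈ X)
    (hnc : ¬ ∀ z ∈ R, ∀ w ∈ R, F (z, x₀) = F (w, x₀)) :
    ∀ z ∈ R, ∀ x ∈ X, ∀ x' ∈ X, F (z, x) = F (z, x') := by
  push Not at hnc
  obtain ⟨z₁, hz₁, z₂, hz₂, hne⟩ := hnc
  have := Subtype.preconnectedSpace hXc.isPreconnected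
  let slice : X → R → OnePoint ℂ := fun x z => F (z, x)
  have hslice : Continuous slice := continuous_pi fun z =>
    (continuousOn_iff_continuous_domRestrict.mp (hF.continuousOn_right z.2))
  let W : Set (R → OnePoint ℂ) := {f | f ⟨z₁, hz₁⟩ ≠ f ⟨z₂, hz₂⟩}
  have hW : IsOpen W := isOpen_ne_fun (continuous_apply _) (continuous_apply _)
  have hfin' : (range slice ∩ W).Finite := hfin.subset <| by
    rintro _ ⟨⟨⟨x, hx⟩, rfl⟩, hsep⟩
    refine ⟨fun z => F (z, x), hF.sphHoloOnS_left hx, fun z hz => hmaps z hz x hx, ?_,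
      fun _ => rfl⟩
    rintro ⟨c, hc⟩
    exact hsep ((hc z₁ hz₁).trans (hc z₂ hz₂).symm)
  have hconst := hslice.apply_eq_of_finite_range_inter hW hfin' (x₀ := ⟨x₀, hx₀⟩) hne
  intro z hz x hx x' hx'
  exact (congrFun (hconst ⟨x, hx⟩) ⟨z, hz⟩).trans (congrFun (hconst ⟨x', hx'⟩) ⟨z, hz⟩).symm

/-- **Rigidity lemma (the paper's Lemma 3.2, with ambient surfaces `ℂ∞`).** Let `R, S` be
nonempty open connected subsets of the Riemann sphere such that the set of nonconstant
holomorphic maps from `R` to `S` is finite, let `X ⊆ ℂᵐ` be a nonempty open connected set,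
and let `F : R × X → S` be holomorphic with `F(·, x₀)` nonconstant for some `x₀ ∈ X`.
Then `F` is independent of `X`. -/
theorem rigidity_lemma (m : ℕ) (R S : Set (OnePoint ℂ))
    (hRo : IsOpen R) (hRc : IsConnected R)
    (hSo : IsOpen S) (hSc : IsConnected S)
    (hfin : {f : ↥R → OnePoint ℂ | ∃ g : OnePoint ℂ → OnePoint ℂ,
        SphHoloOnS g R ∧ MapsTo g R S ∧ (¬ ∃ c, ∀ z ∈ R, g z = c) ∧
        ∀ x : ↥R, f x = g x}.Finite)
    (X : Set (Fin m → ℂ)) (hXo : IsOpen X) (hXc : IsConnected X)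
    (F : OnePoint ℂ × (Fin m → ℂ) → OnePoint ℂ)
    (hF : SphHoloOnMix F R X)
    (hmaps : ∀ z ∈ R, ∀ x ∈ X, F (z, x) ∈ S)
    (x₀ : Fin m → ℂ) (hx₀ : x₀ ∈ X)
    (hnc : ¬ ∀ z ∈ R, ∀ w ∈ R, F (z, x₀) = F (w, x₀)) :
    ∀ z ∈ R, ∀ x ∈ X, ∀ x' ∈ X, F (z, x) = F (z, x') :=
  rigidity_lemma_general m R S hfin X hXc F hF hmaps x₀ hx₀ hnc
end

section
/- Let D = D₁ × ⋯ × Dₙ and W = W₁ × ⋯ × Wₙ, where each D_j ⊆ ℂ is a nonempty open connected set such that ℂ ∖ D_j has nonempty interior, and each W_j ⊆ ℂ is a bounded nonempty open connected set. Let f = (f₁,…,fₙ) : D → W be a proper holomorphic map. Then there exist a permutation p of {1,…,n} and holomorphic maps g_j : D_{p(j)} → W_j such that f_j(z₁,…,zₙ) = g_j(z_{p(j)}) for every j and every (z₁,…,zₙ) ∈ D. -/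
/-!
Fix a variable `z_k` and let it run to the boundary of `D_k` along an ultrafilter. By Montel's
theorem the maps `x ↦ f (update x k ζ)` converge locally uniformly on `D` to a map `H`; by
properness `H` takes no value in `W`, while it takes values in `closure W`. On a polydisc found
by Baire's theorem some component `H_j` maps every one-variable slice into `frontier W_j`, which has
empty interior, so by the open mapping theorem `H_j` is constant there, and by the identity
theorem on all of `D`.

Consequently, if every component `f_j` depended on some variable `ℓ j ≠ k`, the product over `j` of
the differences `f_j (…, z_{ℓ j} = a_j, …) - f_j (…, z_{ℓ j} = b_j, …)`, viewed as a function of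
`z_k`, would tend to `0` at the boundary of `D_k`; by the maximum principle it vanishes, and by
Baire's theorem and the identity theorem one factor vanishes identically, a contradiction. So each
variable `z_k` has a component `f_{χ k}` depending on `z_k` alone. If `χ` were not injective, that
component would be constant, and dropping it would leave a proper map into fewer factors than
variables, which the same argument rules out by induction.
-/

open Set Filter Topology Metric
open Function (update)

namespace RemmertStein

section Coordinates

variable {ι X β : Type*} [DecidableEq ι] {D : ι → Set X}

theorem update_mem_univ_pi {z : ι → X} (hz : z ∈ univ.pi D) {l : ι} {w : X} (hw : w ∈ D l) :
    update z l w ∈ univ.pi D := by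
  intro i _
  rcases eq_or_ne i l with rfl | h
  · simpa using hw
  · simpa [h] using hz i (mem_univ i)

theorem eq_of_forall_update_eq {g : (ι → X) → β} (S : Finset ι)
    (hS : ∀ l ∈ S, ∀ z ∈ univ.pi D, ∀ w ∈ D l, g (update z l w) = g z)
    {z z' : ι → X} (hz : z ∈ univ.pi D) (hz' : z' ∈ univ.pi D) (hzz' : ∀ i ∉ S, z i = z' i) :
    g z = g z' := by
  induction S using Finset.induction_on generalizing z with
  | empty => exact congrArg g (funext fun i => hzz' i (Finset.notMem_empty i))
  | @insert i S _ IH =>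
    rw [← hS i (Finset.mem_insert_self i S) z hz (z' i) (hz' i (mem_univ i))]
    refine IH (fun l hl => hS l (Finset.mem_insert_of_mem hl))
      (update_mem_univ_pi hz (hz' i (mem_univ i))) fun l hl => ?_
    rcases eq_or_ne l i with rfl | hli
    · simp
    · simpa [hli] using hzz' l (by simp [hl, hli])

def DependsOnlyOn (D : ι → Set X) (g : (ι → X) → β) (k : ι) : Prop :=
  ∀ l ≠ k, ∀ z ∈ univ.pi D, ∀ w ∈ D l, g (update z l w) = g z

variable [Fintype ι] {g : (ι → X) → β} {k : ι}

theorem DependsOnlyOn.eq_of_apply_eq (hg : DependsOnlyOn D g k) {z z' : ι → X}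
    (hz : z ∈ univ.pi D) (hz' : z' ∈ univ.pi D) (hk : z k = z' k) : g z = g z' :=
  eq_of_forall_update_eq (Finset.univ.erase k) (fun l hl => hg l (Finset.ne_of_mem_erase hl))
    hz hz' fun i hi => by rwa [of_not_not fun h => hi (Finset.mem_erase.mpr ⟨h, Finset.mem_univ i⟩)]

theorem DependsOnlyOn.eq_of_ne {k' : ι} (hg : DependsOnlyOn D g k) (hg' : DependsOnlyOn D g k')
    (hkk' : k ≠ k') {z z' : ι → X} (hz : z ∈ univ.pi D) (hz' : z' ∈ univ.pi D) : g z = g z' :=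
  eq_of_forall_update_eq Finset.univ
    (fun l _ => if hl : l = k then hg' l (hl ▸ hkk') else hg l hl) hz hz' (by simp)

end Coordinates

theorem exists_mem_nhds_of_subset_iUnion {X : Type*} [TopologicalSpace X] [T2Space X]
    [LocallyCompactSpace X] {U : Set X} (hU : IsOpen U) (hne : U.Nonempty) {J : Type*} [Finite J]
    {A : J → Set X} (hA : ∀ j, IsClosed (Subtype.val ⁻¹' A j : Set U)) (hcov : U ⊆ ⋃ j, A j) :
    ∃ j, ∃ a ∈ U, A j ∈ 𝓝 a := by
  have := IsOpen.locallyCompactSpace hU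
  have := hne.to_subtype
  obtain ⟨j, a, ha⟩ := nonempty_interior_of_iUnion_of_closed hA
    (eq_univ_of_forall fun x => by simpa using hcov x.2)
  refine ⟨j, a, a.2, ?_⟩
  rw [mem_interior_iff_mem_nhds, nhds_subtype_eq_comap] at ha
  obtain ⟨t, ht, hta⟩ := ha
  exact mem_of_superset (inter_mem ht (IsOpen.mem_nhds hU a.2))
    fun x hx => hta (a := ⟨x, hx.2⟩) hx.1

theorem tendsto_prod_of_tendsto_zero {α J R : Type*} [Fintype J] [NormedCommRing R]
    [NormOneClass R] {l : Filter α} {g : J → α → R} {j₀ : J} (h₀ : Tendsto (g j₀) l (𝓝 0))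
    {C : ℝ} (hC : ∀ j a, ‖g j a‖ ≤ C) : Tendsto (fun a => ∏ j, g j a) l (𝓝 0) := by
  classical
  simp_rw [← Finset.mul_prod_erase _ _ (Finset.mem_univ j₀)]
  exact h₀.zero_mul_isBoundedUnder_le (isBoundedUnder_of ⟨_, fun a =>
    (Finset.norm_prod_le _ _).trans (Finset.prod_le_prod (fun _ _ => norm_nonneg _)
      fun j _ => hC j a)⟩)

section OneVariable

theorem exists_eqOn_const_of_mapsTo_frontier {V S : Set ℂ} (hV : IsOpen V)
    (hVc : IsPreconnected V) (hS : IsOpen S) {u : ℂ → ℂ} (hu : DifferentiableOn ℂ u V)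
    (hmaps : MapsTo u V (frontier S)) : ∃ c, ∀ z ∈ V, u z = c := by
  rcases (hu.analyticOnNhd hV).is_constant_or_isOpen hVc with hconst | hopen
  · exact hconst
  · have : u '' V ⊆ interior (frontier S) :=
      (hopen V subset_rfl hV).subset_interior_iff.mpr hmaps.image_subset
    rw [← frontier_compl, interior_frontier hS.isClosed_compl] at this
    exact ⟨0, fun z hz => absurd (this (mem_image_of_mem u hz)) (notMem_empty _)⟩

variable {E F : Type*} [NormedAddCommGroup E] [NormedSpace ℂ E] [NormedAddCommGroup F]
  [NormedSpace ℂ F]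

theorem noncompactSpace_of_isOpen [Nontrivial E] {U : Set E} (hU : IsOpen U) (hne : U.Nonempty) :
    NoncompactSpace U := by
  refine not_compactSpace_iff.mp fun h => ?_
  have hUc : IsCompact U := isCompact_iff_compactSpace.mpr h
  exact noncompact_univ E (IsClopen.eq_univ ⟨hUc.isClosed, hU⟩ hne ▸ hUc)

theorem eqOn_zero_of_tendsto_cocompact [Nontrivial E] [StrictConvexSpace ℝ F] {U : Set E}
    (hUo : IsOpen U) (hUc : IsPreconnected U) {u : E → F} (hu : DifferentiableOn ℂ u U)
    (hlim : Tendsto (U.domRestrict u) (cocompact U) (𝓝 0)) : EqOn u 0 U := by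
  intro z hz
  by_contra hne
  have hpos : 0 < ‖u z‖ := norm_pos_iff.mpr hne
  obtain ⟨m, hm⟩ := hu.continuousOn.domRestrict.norm.exists_forall_ge' ⟨z, hz⟩
    (hlim.norm.eventually (ge_mem_nhds (by simpa using hpos)))
  have hconst := Complex.eqOn_of_isPreconnected_of_isMaxOn_norm hUc hUo hu m.2
    fun ζ hζ => hm ⟨ζ, hζ⟩
  have := noncompactSpace_of_isOpen hUo ⟨z, hz⟩
  have hm0 : u m = 0 := tendsto_nhds_unique
    (tendsto_const_nhds.congr fun ζ : U => (hconst ζ.2).symm) hlim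
  have := hm ⟨z, hz⟩
  simp only [domRestrict_apply, hm0, norm_zero] at this
  linarith

end OneVariable

section Montel

variable {E F ι : Type*} [NormedAddCommGroup E] [NormedSpace ℂ E] [NormedAddCommGroup F]
  [NormedSpace ℂ F] {u : ι → E → F} {U : Set E} {M : ℝ}

theorem equicontinuousAt_of_norm_le (hU : IsOpen U) (hu : ∀ i, DifferentiableOn ℂ (u i) U)
    (hM : ∀ i, ∀ x ∈ U, ‖u i x‖ ≤ M) {x : E} (hx : x ∈ U) : EquicontinuousAt u x := by
  obtain ⟨r, hr, hball⟩ := Metric.isOpen_iff.mp hU x hx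
  refine Metric.equicontinuousAt_of_continuity_modulus (fun y => 2 * M / r * dist y x) ?_ u ?_
  · have : Continuous fun y => 2 * M / r * dist y x := by fun_prop
    simpa using this.tendsto x
  filter_upwards [ball_mem_nhds x hr] with y hy i
  rw [dist_comm]
  refine Complex.dist_le_div_mul_dist_of_mapsTo_ball ((hu i).mono hball) (fun w hw => ?_) hy
  rw [mem_closedBall, dist_eq_norm, two_mul]
  exact (norm_sub_le _ _).trans (add_le_add (hM i w (hball hw)) (hM i x hx))

/-- Montel's theorem, with ultrafilters in place of subsequences. -/
theorem exists_tendstoLocallyUniformlyOn [LocallyCompactSpace E] [ProperSpace F]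
    (hU : IsOpen U) (hu : ∀ i, DifferentiableOn ℂ (u i) U) (hM : ∀ i, ∀ x ∈ U, ‖u i x‖ ≤ M)
    (𝒰 : Ultrafilter ι) : ∃ H, TendstoLocallyUniformlyOn u H 𝒰 U := by
  have hpt : ∀ x ∈ U, ∃ y, Tendsto (u · x) 𝒰 (𝓝 y) := fun x hx => by
    obtain ⟨y, -, hy⟩ := (isCompact_closedBall (0 : F) M).ultrafilter_le_nhds (𝒰.map (u · x))
      (by
        rw [Ultrafilter.coe_map, le_principal_iff]
        exact mem_map.mpr (univ_mem' fun i => by simpa using hM i x hx))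
    exact ⟨y, hy⟩
  choose! H hH using hpt
  set 𝔖 : Set (Set E) := {K | IsCompact K ∧ K ⊆ U}
  have h𝔖 : ⋃₀ 𝔖 = U := subset_antisymm (sUnion_subset fun K hK => hK.2)
    fun x hx => mem_sUnion_of_mem (mem_singleton x) ⟨isCompact_singleton, by simpa using hx⟩
  have hunif := (EquicontinuousOn.tendsto_uniformOnFun_iff_pi' (𝔖 := 𝔖) (fun K hK => hK.1)
    (fun K hK x hx => (equicontinuousAt_of_norm_le hU hu hM (hK.2 hx)).equicontinuousWithinAt K)
    (𝒰 : Filter ι) H).mpr (tendsto_pi_nhds.mpr fun x => hH x (h𝔖.subset x.2))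
  refine ⟨H, (tendstoLocallyUniformlyOn_iff_forall_isCompact hU).mpr fun K hKU hK => ?_⟩
  exact UniformOnFun.tendsto_iff_tendstoUniformlyOn.mp hunif K ⟨hK, hKU⟩

end Montel

section PolyDomains

variable {ι J F : Type*} [Fintype ι] [DecidableEq ι] {D : ι → Set ℂ}
  [NormedAddCommGroup F] [NormedSpace ℂ F]

theorem differentiable_update_left (l : ι) (c : ℂ) :
    Differentiable ℂ (fun x : ι → ℂ => update x l c) := by
  refine differentiable_pi.mpr fun i => ?_
  rcases eq_or_ne i l with rfl | h
  · simp
  · simpa [h] using differentiable_apply i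

theorem _root_.DifferentiableOn.comp_update {f : (ι → ℂ) → F}
    (hf : DifferentiableOn ℂ f (univ.pi D)) {x : ι → ℂ} (hx : x ∈ univ.pi D) (i : ι) :
    DifferentiableOn ℂ (fun w => f (update x i w)) (D i) :=
  hf.comp (fun y _ => (hasFDerivAt_update x y).differentiableAt.differentiableWithinAt)
    fun _ hw => update_mem_univ_pi hx hw

theorem _root_.DifferentiableOn.comp_update_left {f : (ι → ℂ) → F}
    (hf : DifferentiableOn ℂ f (univ.pi D)) {l : ι} {c : ℂ} (hc : c ∈ D l) :
    DifferentiableOn ℂ (fun x => f (update x l c)) (univ.pi D) :=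
  hf.comp (differentiable_update_left l c).differentiableOn fun _ hx => update_mem_univ_pi hx hc

theorem eqOn_zero_univ_pi_of_eventuallyEq_zero [CompleteSpace F] (hDo : ∀ i, IsOpen (D i))
    (hDc : ∀ i, IsPreconnected (D i)) {g : (ι → ℂ) → F}
    (hg : ∀ x ∈ univ.pi D, ∀ i, DifferentiableOn ℂ (fun w => g (update x i w)) (D i))
    {a : ι → ℂ} (ha : a ∈ univ.pi D) (h0 : g =ᶠ[𝓝 a] 0) : EqOn g 0 (univ.pi D) := by
  obtain ⟨δ, hδ, hball⟩ := Metric.mem_nhds_iff.mp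
    (inter_mem h0 ((isOpen_set_pi finite_univ fun i _ => hDo i).mem_nhds ha))
  rw [ball_pi a hδ] at hball
  have hB : ∀ i, ball (a i) δ ⊆ D i := fun i w hw => by
    simpa using (hball (update_mem_univ_pi (fun l _ => mem_ball_self hδ) hw)).2 i (mem_univ i)
  suffices H : ∀ S : Finset ι, ∀ z ∈ univ.pi D, (∀ i ∉ S, z i ∈ ball (a i) δ) → g z = 0 from
    fun z hz => H Finset.univ z hz (by simp)
  intro S
  induction S using Finset.induction_on with
  | empty => exact fun z _ hz => (hball fun i _ => hz i (Finset.notMem_empty i)).1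
  | @insert i S _ IH =>
    intro z hz hzS
    have hslice : EqOn (fun w => g (update z i w)) 0 (D i) := by
      refine ((hg z hz i).analyticOnNhd (hDo i)).eqOn_zero_of_preconnected_of_eventuallyEq_zero
        (hDc i) (hB i (mem_ball_self hδ)) ?_
      filter_upwards [ball_mem_nhds (a i) hδ] with w hw
      refine IH _ (update_mem_univ_pi hz (hB i hw)) fun l hl => ?_
      rcases eq_or_ne l i with rfl | hli
      · simpa using hw
      · simpa [hli] using hzS l (by simp [hl, hli])
    simpa using hslice (hz i (mem_univ i))

variable [Fintype J]

theorem exists_eqOn_zero_of_prod_eq_zero (hDo : ∀ i, IsOpen (D i))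
    (hDc : ∀ i, IsConnected (D i)) {G : J → (ι → ℂ) → ℂ}
    (hG : ∀ j, DifferentiableOn ℂ (G j) (univ.pi D)) (hprod : ∀ x ∈ univ.pi D, ∏ j, G j x = 0) :
    ∃ j, EqOn (G j) 0 (univ.pi D) := by
  obtain ⟨j, a, ha, hnhds⟩ := exists_mem_nhds_of_subset_iUnion (A := fun j => {x | G j x = 0})
    (isOpen_set_pi finite_univ fun i _ => hDo i)
    (univ_pi_nonempty_iff.mpr fun i => (hDc i).nonempty)
    (fun j => isClosed_eq (hG j).continuousOn.domRestrict continuous_const)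
    (fun x hx => by simpa [Finset.prod_eq_zero_iff] using hprod x hx)
  exact ⟨j, eqOn_zero_univ_pi_of_eventuallyEq_zero hDo (fun i => (hDc i).isPreconnected)
    (fun x hx i => (hG j).comp_update hx i) ha hnhds⟩

theorem exists_component_eq_const_of_notMem (hDo : ∀ i, IsOpen (D i))
    (hDc : ∀ i, IsConnected (D i)) {W : J → Set ℂ} (hWo : ∀ j, IsOpen (W j))
    {H : (ι → ℂ) → J → ℂ} (hHc : ContinuousOn H (univ.pi D))
    (hHs : ∀ x ∈ univ.pi D, ∀ i, DifferentiableOn ℂ (fun w => H (update x i w)) (D i))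
    (hcl : ∀ x ∈ univ.pi D, ∀ j, H x j ∈ closure (W j))
    (hout : ∀ x ∈ univ.pi D, H x ∉ univ.pi W) : ∃ j c, ∀ x ∈ univ.pi D, H x j = c := by
  have hDo' : IsOpen (univ.pi D) := isOpen_set_pi finite_univ fun i _ => hDo i
  obtain ⟨j, a, ha, hnhds⟩ := exists_mem_nhds_of_subset_iUnion (A := fun j => {x | H x j ∉ W j})
    hDo' (univ_pi_nonempty_iff.mpr fun i => (hDc i).nonempty)
    (fun j => (hWo j).isClosed_compl.preimage ((continuous_apply j).comp hHc.domRestrict))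
    (fun x hx => by simpa using hout x hx)
  have hHs' : ∀ x ∈ univ.pi D, ∀ i, DifferentiableOn ℂ (fun w => H (update x i w) j) (D i) :=
    fun x hx i => differentiableOn_pi.mp (hHs x hx i) j
  obtain ⟨δ, hδ, hball⟩ := Metric.mem_nhds_iff.mp (inter_mem hnhds (hDo'.mem_nhds ha))
  rw [ball_pi a hδ] at hball
  have hconst : ∀ x ∈ univ.pi fun i => ball (a i) δ, H x j = H a j := by
    refine fun x hx => eq_of_forall_update_eq (g := fun x => H x j) Finset.univ
      (fun l _ z hz w hw => ?_) hx (fun l _ => mem_ball_self hδ) (by simp)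
    have hmem : ∀ w ∈ ball (a l) δ, update z l w ∈ {x | H x j ∉ W j} ∩ univ.pi D :=
      fun w hw => hball (update_mem_univ_pi hz hw)
    have hmaps : MapsTo (fun w => H (update z l w) j) (ball (a l) δ) (frontier (W j)) :=
      fun w hw => (hWo j).frontier_eq ▸ ⟨hcl _ (hmem w hw).2 j, (hmem w hw).1⟩
    obtain ⟨c, hc⟩ := exists_eqOn_const_of_mapsTo_frontier isOpen_ball
      (convex_ball _ _).isPreconnected (hWo j)
      ((hHs' z (hball hz).2 l).mono fun w hw => by simpa using (hmem w hw).2 l trivial) hmaps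
    simpa [hc w hw] using (hc (z l) (hz l trivial)).symm
  have hzero := eqOn_zero_univ_pi_of_eventuallyEq_zero (g := fun x => H x j - H a j) hDo
    (fun i => (hDc i).isPreconnected) (fun x hx i => (hHs' x hx i).sub_const _) ha (by
      filter_upwards [ball_mem_nhds a hδ] with x hx
      rw [ball_pi a hδ] at hx
      simpa [sub_eq_zero] using hconst x hx)
  exact ⟨j, H a j, fun x hx => sub_eq_zero.mp (hzero hx)⟩

end PolyDomains

section ProperMaps

variable {ι J : Type*} {D : ι → Set ℂ} {W : J → Set ℂ} {f : (ι → ℂ) → J → ℂ}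

structure IsProperHolomorphicMap (D : ι → Set ℂ) (W : J → Set ℂ) (f : (ι → ℂ) → J → ℂ) :
    Prop where
  isOpen_target : ∀ j, IsOpen (W j)
  isBounded_target : ∀ j, Bornology.IsBounded (W j)
  differentiableOn : DifferentiableOn ℂ f (univ.pi D)
  mapsTo : MapsTo f (univ.pi D) (univ.pi W)
  isCompact_preimage : ∀ K ⊆ univ.pi W, IsCompact K → IsCompact (univ.pi D ∩ f ⁻¹' K)

namespace IsProperHolomorphicMap

theorem exists_norm_le [Fintype J] (hf : IsProperHolomorphicMap D W f) :
    ∃ C, ∀ x ∈ univ.pi D, ‖f x‖ ≤ C := by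
  obtain ⟨C, hC⟩ := isBounded_iff_forall_norm_le.mp (Bornology.IsBounded.pi hf.isBounded_target)
  exact ⟨C, fun x hx => hC _ (hf.mapsTo hx)⟩

theorem drop_const_component [Fintype ι] [Fintype J] (hf : IsProperHolomorphicMap D W f) {j₀ : J}
    (hj₀ : ∀ x ∈ univ.pi D, ∀ y ∈ univ.pi D, f x j₀ = f y j₀) :
    IsProperHolomorphicMap D (fun j : {j // j ≠ j₀} => W j) (fun x j => f x j) := by
  classical
  refine ⟨fun j => hf.isOpen_target j, fun j => hf.isBounded_target j,
    differentiableOn_pi.mpr fun j => differentiableOn_pi.mp hf.differentiableOn j,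
    fun x hx j _ => hf.mapsTo hx j trivial, fun K hKW hK => ?_⟩
  rcases (univ.pi D).eq_empty_or_nonempty with hD | ⟨a, ha⟩
  · simp [hD]
  let e := Homeomorph.piSplitAt j₀ fun _ : J => ℂ
  convert hf.isCompact_preimage (e ⁻¹' ({f a j₀} ×ˢ K)) ?_
    (e.isCompact_preimage.mpr (isCompact_singleton.prod hK)) using 1
  · ext x
    simp only [mem_inter_iff, mem_preimage, mem_prod, mem_singleton_iff, e,
      Homeomorph.piSplitAt_apply]
    exact and_congr_right fun hx => (and_iff_right (hj₀ x hx a ha)).symm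
  · intro y hy j _
    simp only [mem_preimage, mem_prod, mem_singleton_iff, e, Homeomorph.piSplitAt_apply] at hy
    by_cases hj : j = j₀
    · subst hj
      exact hy.1 ▸ hf.mapsTo ha j trivial
    · exact hKW hy.2 ⟨j, hj⟩ trivial

theorem notMem_of_tendsto [Fintype J] [DecidableEq ι] (hf : IsProperHolomorphicMap D W f)
    {x : ι → ℂ} (hx : x ∈ univ.pi D) {k : ι} {l : Filter (D k)} [l.NeBot]
    (hl : l ≤ cocompact (D k)) {y : J → ℂ}
    (hy : Tendsto (fun ζ : D k => f (update x k ζ)) l (𝓝 y)) : y ∉ univ.pi W := by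
  intro hyW
  obtain ⟨ρ, hρ, hρW⟩ := Metric.isOpen_iff.mp
    (isOpen_set_pi finite_univ fun j _ => hf.isOpen_target j) y hyW
  set P := univ.pi D ∩ f ⁻¹' closedBall y (ρ / 2)
  have hP : IsCompact P := hf.isCompact_preimage _
    ((closedBall_subset_ball (by linarith)).trans hρW) (isCompact_closedBall _ _)
  have hPk : IsCompact (Subtype.val ⁻¹' ((· k) '' P) : Set (D k)) := by
    rw [Subtype.isCompact_iff, image_preimage_eq_of_subset]
    · exact hP.image (continuous_apply k)
    · rintro _ ⟨z, hz, rfl⟩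
      exact ⟨⟨z k, hz.1 k trivial⟩, rfl⟩
  have hfar : ∀ᶠ ζ in l, ζ ∉ Subtype.val ⁻¹' ((· k) '' P) := hl hPk.compl_mem_cocompact
  obtain ⟨ζ, hζP, hζy⟩ := (hfar.and (hy (closedBall_mem_nhds y (half_pos hρ)))).exists
  exact hζP ⟨update x k ζ, ⟨update_mem_univ_pi hx ζ.2, hζy⟩, by simp⟩

variable [Fintype ι] [DecidableEq ι] [Fintype J]

theorem exists_component_tendsto_const (hf : IsProperHolomorphicMap D W f)
    (hDo : ∀ i, IsOpen (D i)) (hDc : ∀ i, IsConnected (D i)) (k : ι) (𝒰 : Ultrafilter (D k))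
    (h𝒰 : ↑𝒰 ≤ cocompact (D k)) :
    ∃ j c, ∀ x ∈ univ.pi D, Tendsto (fun ζ : D k => f (update x k ζ) j) 𝒰 (𝓝 c) := by
  have hfk : ∀ ζ : D k, DifferentiableOn ℂ (fun x => f (update x k ζ)) (univ.pi D) :=
    fun ζ => hf.differentiableOn.comp_update_left ζ.2
  obtain ⟨C, hC⟩ := hf.exists_norm_le
  obtain ⟨H, hH⟩ := exists_tendstoLocallyUniformlyOn (isOpen_set_pi finite_univ fun i _ => hDo i)
    hfk (fun ζ x hx => hC _ (update_mem_univ_pi hx ζ.2)) 𝒰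
  have hlim : ∀ x ∈ univ.pi D, Tendsto (fun ζ : D k => f (update x k ζ)) 𝒰 (𝓝 (H x)) :=
    fun x hx => hH.tendsto_at hx
  have hHs : ∀ x ∈ univ.pi D, ∀ i, DifferentiableOn ℂ (fun w => H (update x i w)) (D i) :=
    fun x hx i => (hH.comp _ (fun w hw => update_mem_univ_pi hx hw)
      (continuous_const.update i continuous_id :
        Continuous fun w => update x i w).continuousOn).differentiableOn
      (Eventually.of_forall fun ζ => (hfk ζ).comp_update hx i) (hDo i)
  have hcl : ∀ x ∈ univ.pi D, ∀ j, H x j ∈ closure (W j) := fun x hx j =>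
    mem_closure_of_tendsto (tendsto_pi_nhds.mp (hlim x hx) j)
      (Eventually.of_forall fun ζ => hf.mapsTo (update_mem_univ_pi hx ζ.2) j trivial)
  obtain ⟨j, c, hHj⟩ := exists_component_eq_const_of_notMem hDo hDc hf.isOpen_target
    (hH.continuousOn (Frequently.of_forall fun ζ => (hfk ζ).continuousOn)) hHs hcl
    fun x hx => hf.notMem_of_tendsto hx h𝒰 (hlim x hx)
  exact ⟨j, c, fun x hx => hHj x hx ▸ tendsto_pi_nhds.mp (hlim x hx) j⟩

theorem prod_sub_update_eq_zero (hf : IsProperHolomorphicMap D W f) (hDo : ∀ i, IsOpen (D i))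
    (hDc : ∀ i, IsConnected (D i)) {k : ι} {ℓ : J → ι} (hℓ : ∀ j, ℓ j ≠ k) {a b : J → ℂ}
    (ha : ∀ j, a j ∈ D (ℓ j)) (hb : ∀ j, b j ∈ D (ℓ j)) {z : ι → ℂ} (hz : z ∈ univ.pi D) :
    ∏ j, (f (update z (ℓ j) (a j)) j - f (update z (ℓ j) (b j)) j) = 0 := by
  set Δ : J → (ι → ℂ) → ℂ := fun j x => f (update x (ℓ j) (a j)) j - f (update x (ℓ j) (b j)) j
  have hΔ : ∀ j, DifferentiableOn ℂ (Δ j) (univ.pi D) := fun j =>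
    (differentiableOn_pi.mp (hf.differentiableOn.comp_update_left (ha j)) j).sub
      (differentiableOn_pi.mp (hf.differentiableOn.comp_update_left (hb j)) j)
  obtain ⟨C, hC⟩ := hf.exists_norm_le
  have hΔC : ∀ j, ∀ x ∈ univ.pi D, ‖Δ j x‖ ≤ C + C := fun j x hx =>
    (norm_sub_le _ _).trans (add_le_add
      ((norm_le_pi_norm _ j).trans (hC _ (update_mem_univ_pi hx (ha j))))
      ((norm_le_pi_norm _ j).trans (hC _ (update_mem_univ_pi hx (hb j)))))
  -- Near the boundary of `D k`, one factor tends to `c - c = 0` and the others stay bounded.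
  have hlim : Tendsto ((D k).domRestrict fun ζ => ∏ j, Δ j (update z k ζ)) (cocompact (D k))
      (𝓝 0) := by
    refine (tendsto_iff_ultrafilter _ _ _).mpr fun 𝒰 h𝒰 => ?_
    obtain ⟨j₀, c, hc⟩ := hf.exists_component_tendsto_const hDo hDc k 𝒰 h𝒰
    refine tendsto_prod_of_tendsto_zero (j₀ := j₀) ?_
      fun j ζ => hΔC j _ (update_mem_univ_pi hz ζ.2)
    simpa [Δ, Function.update_comm (hℓ j₀).symm] using
      (hc _ (update_mem_univ_pi hz (ha j₀))).sub (hc _ (update_mem_univ_pi hz (hb j₀)))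
  simpa [Δ] using eqOn_zero_of_tendsto_cocompact (hDo k) (hDc k).isPreconnected
    (DifferentiableOn.fun_finsetProd fun j _ => (hΔ j).comp_update hz k) hlim (hz k trivial)

theorem exists_dependsOnlyOn (hf : IsProperHolomorphicMap D W f) (hDo : ∀ i, IsOpen (D i))
    (hDc : ∀ i, IsConnected (D i)) (k : ι) : ∃ j, DependsOnlyOn D (fun x => f x j) k := by
  by_contra! h
  simp only [DependsOnlyOn, not_forall] at h
  choose ℓ hℓ z hz w hw hne using h
  obtain ⟨j, hj⟩ := exists_eqOn_zero_of_prod_eq_zero hDo hDc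
    (G := fun j x => f (update x (ℓ j) (w j)) j - f (update x (ℓ j) (z j (ℓ j))) j)
    (fun j => (differentiableOn_pi.mp (hf.differentiableOn.comp_update_left (hw j)) j).sub
      (differentiableOn_pi.mp (hf.differentiableOn.comp_update_left (hz j (ℓ j) trivial)) j))
    fun x hx => hf.prod_sub_update_eq_zero hDo hDc hℓ hw (fun j => hz j (ℓ j) trivial) hx
  exact hne j (by simpa [sub_eq_zero] using hj (hz j))

theorem card_le (hf : IsProperHolomorphicMap D W f) (hDo : ∀ i, IsOpen (D i))
    (hDc : ∀ i, IsConnected (D i)) : Fintype.card ι ≤ Fintype.card J := by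
  induction hJ : Fintype.card J using Nat.strong_induction_on generalizing J with
  | _ m IH =>
  by_contra! hlt
  choose χ hχ using hf.exists_dependsOnlyOn hDo hDc
  obtain ⟨k, k', hkk', hχk⟩ := Fintype.exists_ne_map_eq_of_card_lt χ (hJ ▸ hlt)
  classical
  have hf' := hf.drop_const_component fun x hx y hy => (hχ k).eq_of_ne (hχk ▸ hχ k') hkk' hx hy
  have hcard : Fintype.card {j // j ≠ χ k} < m :=
    hJ ▸ Fintype.card_subtype_lt (p := (· ≠ χ k)) (not_not.mpr rfl)
  have := IH _ hcard hf' rfl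
  omega

theorem exists_perm_dependsOnlyOn {W : ι → Set ℂ} {f : (ι → ℂ) → ι → ℂ}
    (hf : IsProperHolomorphicMap D W f) (hDo : ∀ i, IsOpen (D i))
    (hDc : ∀ i, IsConnected (D i)) :
    ∃ p : Equiv.Perm ι, ∀ j, DependsOnlyOn D (fun x => f x j) (p j) := by
  choose χ hχ using hf.exists_dependsOnlyOn hDo hDc
  have hχinj : Function.Injective χ := fun k k' hχk => by
    by_contra hkk'
    have hf' := hf.drop_const_component fun x hx y hy => (hχ k).eq_of_ne (hχk ▸ hχ k') hkk' hx hy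
    have := hf'.card_le hDo hDc
    have := Fintype.card_subtype_lt (p := (· ≠ χ k)) (not_not.mpr rfl)
    omega
  let P := Equiv.ofBijective χ (Finite.injective_iff_bijective.mp hχinj)
  refine ⟨P.symm, fun j => ?_⟩
  simpa only [P, Equiv.ofBijective_apply_symm_apply] using hχ (P.symm j)

end IsProperHolomorphicMap

end ProperMaps

end RemmertStein

theorem remmert_stein_general (n : ℕ) (D W : Fin n → Set ℂ)
    (hDo : ∀ j, IsOpen (D j)) (hDc : ∀ j, IsConnected (D j))
    (hWo : ∀ j, IsOpen (W j))
    (hWbd : ∀ j, Bornology.IsBounded (W j))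
    (f : (Fin n → ℂ) → (Fin n → ℂ))
    (hf : DifferentiableOn ℂ f (univ.pi D))
    (hmaps : MapsTo f (univ.pi D) (univ.pi W))
    (hproper : ∀ K, K ⊆ univ.pi W → IsCompact K → IsCompact (univ.pi D ∩ f ⁻¹' K)) :
    ∃ (p : Equiv.Perm (Fin n)) (g : Fin n → ℂ → ℂ),
      (∀ j, DifferentiableOn ℂ (g j) (D (p j))) ∧
      (∀ j, MapsTo (g j) (D (p j)) (W j)) ∧
      (∀ z ∈ univ.pi D, ∀ j, f z j = g j (z (p j))) := by
  obtain ⟨p, hp⟩ := RemmertStein.IsProperHolomorphicMap.exists_perm_dependsOnlyOn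
    ⟨hWo, hWbd, hf, hmaps, hproper⟩ hDo hDc
  obtain ⟨a, ha⟩ : (univ.pi D).Nonempty := univ_pi_nonempty_iff.mpr fun i => (hDc i).nonempty
  refine ⟨p, fun j w => f (update a (p j) w) j,
    fun j => differentiableOn_pi.mp (hf.comp_update ha (p j)) j,
    fun j w hw => hmaps (RemmertStein.update_mem_univ_pi ha hw) j trivial,
    fun z hz j => (hp j).eq_of_apply_eq hz
      (RemmertStein.update_mem_univ_pi ha (hz (p j) trivial)) (by simp)⟩

/-- **Remmert–Stein theorem.** Let `D = D₁ × ⋯ × Dₙ` with each `Dⱼ ⊆ ℂ` a nonempty open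
connected set whose complement has nonempty interior, and `W = W₁ × ⋯ × Wₙ` with each
`Wⱼ ⊆ ℂ` a bounded nonempty open connected set. Every proper holomorphic map `f : D → W`
splits: each component `fⱼ` depends only on the variable `z_{p j}` for some permutation `p`. -/
theorem remmert_stein (n : ℕ) (hn : 1 ≤ n) (D W : Fin n → Set ℂ)
    (hDo : ∀ j, IsOpen (D j)) (hDc : ∀ j, IsConnected (D j))
    (hDint : ∀ j, (interior (D j)ᶜ).Nonempty)
    (hWo : ∀ j, IsOpen (W j)) (hWc : ∀ j, IsConnected (W j))
    (hWbd : ∀ j, Bornology.IsBounded (W j))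
    (f : (Fin n → ℂ) → (Fin n → ℂ))
    (hf : DifferentiableOn ℂ f (univ.pi D))
    (hmaps : MapsTo f (univ.pi D) (univ.pi W))
    (hproper : ∀ K, K ⊆ univ.pi W → IsCompact K → IsCompact (univ.pi D ∩ f ⁻¹' K)) :
    ∃ (p : Equiv.Perm (Fin n)) (g : Fin n → ℂ → ℂ),
      (∀ j, DifferentiableOn ℂ (g j) (D (p j))) ∧
      (∀ j, MapsTo (g j) (D (p j)) (W j)) ∧
      (∀ z ∈ univ.pi D, ∀ j, f z j = g j (z (p j))) :=
  remmert_stein_general n D W hDo hDc hWo hWbd f hf hmaps hproper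
end

section
/- Let 𝔻 ⊆ ℂ be the open unit disc and let F : 𝔻 × ℂ → 𝔻 × ℂ be a biholomorphism (a bijective holomorphic map whose inverse is holomorphic). Then there exist a biholomorphism ψ : 𝔻 → 𝔻 and holomorphic functions A, B : 𝔻 → ℂ with A(z) ≠ 0 for all z ∈ 𝔻, such that F(z₁, z₂) = (ψ(z₁), A(z₁)·z₂ + B(z₁)) for all (z₁, z₂) ∈ 𝔻 × ℂ. -/
/-!
Since `𝔻` is bounded, Liouville's theorem makes the first component of `F` constant on every
fiber `{z} × ℂ`, so `F` maps fibers to fibers and induces the automorphism `ψ` of `𝔻`. On each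
fiber `F` restricts to a biholomorphism of `ℂ`, which is affine: an entire automorphism `f` with
inverse `g` is proper, so `ζ ↦ 1 / g (1 / ζ)` has a removable singularity at `0`, giving
`‖w‖ = O(‖g w‖)` and hence `‖f z‖ = O(‖z‖)` at infinity, and the difference quotient
`(f z - f 0) / z` is then a bounded entire function.
-/

open Set Filter Topology Asymptotics Bornology Function Metric

theorem Function.LeftInverse.tendsto_cobounded {X Y : Type*} [PseudoMetricSpace X] [ProperSpace X]
    [MetricSpace Y] [ProperSpace Y] {f : X → Y} {g : Y → X} (hgf : LeftInverse g f)
    (hf : Continuous f) (hg : Continuous g) : Tendsto f (cobounded X) (cobounded Y) := by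
  rw [cobounded_eq_cocompact, cobounded_eq_cocompact]
  exact (hgf.isClosedEmbedding hg hf).tendsto_cocompact

theorem Differentiable.id_isBigO_of_tendsto_cobounded {g : ℂ → ℂ} (hg : Differentiable ℂ g)
    (hg_inf : Tendsto g (cobounded ℂ) (cobounded ℂ)) : (fun w => w) =O[cobounded ℂ] g := by
  set h : ℂ → ℂ := update (fun ζ => (g ζ⁻¹)⁻¹) 0 0
  have hg_ne : ∀ᶠ w in cobounded ℂ, g w ≠ 0 := hg_inf.eventually (eventually_ne_cobounded 0)
  have h_diff : ∀ᶠ ζ in 𝓝[≠] 0, DifferentiableAt ℂ h ζ := by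
    filter_upwards [self_mem_nhdsWithin, tendsto_inv₀_nhdsNE_zero.eventually hg_ne] with ζ hζ hgζ
    have : (fun ζ => (g ζ⁻¹)⁻¹) =ᶠ[𝓝 ζ] h :=
      (eventually_ne_nhds hζ).mono fun x hx => by simp [h, hx]
    exact ((hg _).comp ζ (differentiableAt_inv hζ) |>.inv hgζ).congr_of_eventuallyEq this.symm
  have h_cont : ContinuousAt h 0 :=
    continuousAt_update_same.mpr <|
      tendsto_inv₀_cobounded.comp (hg_inf.comp tendsto_inv₀_nhdsNE_zero)
  have h_bigO : h =O[𝓝 0] fun ζ => ζ := by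
    simpa [h] using
      (Complex.analyticAt_of_differentiable_on_punctured_nhds_of_continuousAt h_diff
        h_cont).differentiableAt.isBigO_sub
  have hg_inv : (fun w => (g w)⁻¹) =O[cobounded ℂ] fun w => w⁻¹ := by
    refine ((h_bigO.mono nhdsWithin_le_nhds).comp_tendsto tendsto_inv₀_cobounded').congr' ?_
      EventuallyEq.rfl
    filter_upwards [eventually_ne_cobounded 0] with w hw
    simp [h, hw]
  simpa using hg_inv.inv_rev (hg_ne.mono fun w hw h0 => absurd (inv_eq_zero.mp h0) hw)

theorem Differentiable.exists_eq_mul_add_of_isBigO_id {f : ℂ → ℂ} (hf : Differentiable ℂ f)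
    (hf_lin : f =O[cobounded ℂ] fun z => z) : ∃ a b : ℂ, ∀ z, f z = a * z + b := by
  have hq : Differentiable ℂ (dslope f 0) := by
    simpa [← differentiableOn_univ] using
      (Complex.differentiableOn_dslope univ_mem).mpr hf.differentiableOn
  have hq_bdd : IsBounded (range (dslope f 0)) := by
    have hsub : (fun z => f z - f 0) =O[cobounded ℂ] fun z => z :=
      hf_lin.sub (isLittleO_const_id_cobounded _).isBigO
    have hq_one : dslope f 0 =O[cobounded ℂ] fun z => z⁻¹ * z :=
      ((isBigO_refl (fun z : ℂ => z⁻¹) _).mul hsub).congr' ((eventually_ne_cobounded 0).mono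
        fun z hz => by simp [dslope_of_ne _ hz, slope_def_field, div_eq_inv_mul]) EventuallyEq.rfl
    rw [hq.continuous.isBounded_range_iff_isBigO, ← cobounded_eq_cocompact]
    refine hq_one.trans (isBigO_of_le' (c := 1) _ fun z => ?_)
    rcases eq_or_ne z 0 with rfl | hz <;> simp [*]
  obtain ⟨a, ha⟩ := hq.exists_const_forall_eq_of_bounded hq_bdd
  refine ⟨a, f 0, fun z => ?_⟩
  have := sub_smul_dslope f 0 z
  rw [ha, sub_zero, smul_eq_mul] at this
  linear_combination -this

theorem Differentiable.exists_eq_mul_add_of_leftInverse_of_rightInverse {f g : ℂ → ℂ}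
    (hf : Differentiable ℂ f) (hg : Differentiable ℂ g) (hgf : LeftInverse g f)
    (hfg : RightInverse g f) : ∃ a b : ℂ, a ≠ 0 ∧ ∀ z, f z = a * z + b := by
  have hf_inf := hgf.tendsto_cobounded hf.continuous hg.continuous
  have hg_inf := hfg.tendsto_cobounded hg.continuous hf.continuous
  obtain ⟨a, b, hab⟩ := hf.exists_eq_mul_add_of_isBigO_id
    ((hg.id_isBigO_of_tendsto_cobounded hg_inf).comp_tendsto hf_inf |>.congr_right fun z => hgf z)
  refine ⟨a, b, fun ha => zero_ne_one (hgf.injective ?_), hab⟩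
  simp [hab, ha]

section Fibers

variable {U V : Set ℂ} {F G : ℂ × ℂ → ℂ × ℂ}

theorem DifferentiableOn.differentiable_apply_mk (hF : DifferentiableOn ℂ F (U ×ˢ univ))
    (hU : IsOpen U) {z : ℂ} (hz : z ∈ U) :
    Differentiable ℂ fun w => F (z, w) := fun w =>
  (hF.differentiableAt ((hU.prod isOpen_univ).mem_nhds ⟨hz, trivial⟩)).comp w
    ((differentiableAt_const z).prodMk differentiableAt_id)

theorem DifferentiableOn.differentiableOn_apply_mk (hF : DifferentiableOn ℂ F (U ×ˢ univ))
    (hU : IsOpen U) (w : ℂ) :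
    DifferentiableOn ℂ (fun z => F (z, w)) U := fun z hz =>
  ((hF.differentiableAt ((hU.prod isOpen_univ).mem_nhds ⟨hz, trivial⟩)).comp z
    (differentiableAt_id.prodMk (differentiableAt_const w))).differentiableWithinAt

theorem DifferentiableOn.fst_apply_mk_eq (hF : DifferentiableOn ℂ F (U ×ˢ univ)) (hU : IsOpen U)
    (hV : IsBounded V) (hFV : MapsTo F (U ×ˢ univ) (V ×ˢ univ)) {z : ℂ} (hz : z ∈ U) (w w' : ℂ) :
    (F (z, w)).1 = (F (z, w')).1 :=
  (hF.differentiable_apply_mk hU hz).fst.apply_eq_apply_of_bounded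
    (hV.subset <| range_subset_iff.mpr fun _ => (hFV ⟨hz, trivial⟩).1) w w'

theorem snd_apply_mk_eq_mul_add_of_fiber_inverse {z z' : ℂ}
    (hF : Differentiable ℂ fun w => F (z, w)) (hG : Differentiable ℂ fun w => G (z', w))
    (hF_fst : ∀ w, (F (z, w)).1 = z') (hG_fst : ∀ w, (G (z', w)).1 = z)
    (hGF : ∀ w, G (F (z, w)) = (z, w)) (hFG : ∀ w, F (G (z', w)) = (z', w)) :
    (F (z, 1)).2 - (F (z, 0)).2 ≠ 0 ∧
      ∀ w, (F (z, w)).2 = ((F (z, 1)).2 - (F (z, 0)).2) * w + (F (z, 0)).2 := by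
  have hF_mk : ∀ w, F (z, w) = (z', (F (z, w)).2) := fun w => Prod.ext (hF_fst w) rfl
  have hG_mk : ∀ w, G (z', w) = (z, (G (z', w)).2) := fun w => Prod.ext (hG_fst w) rfl
  obtain ⟨a, b, ha, hab⟩ := hF.snd.exists_eq_mul_add_of_leftInverse_of_rightInverse hG.snd
    (fun w => by simpa [← hF_mk] using congrArg Prod.snd (hGF w))
    (fun w => by simpa [← hG_mk] using congrArg Prod.snd (hFG w))
  simp only [hab]
  exact ⟨by simpa using ha, fun w => by ring⟩

end Fibers

/-- Every biholomorphism `F` of `𝔻 × ℂ` has the form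
`F(z₁, z₂) = (ψ(z₁), A(z₁)·z₂ + B(z₁))` where `ψ` is a biholomorphism of the unit disc `𝔻`,
and `A, B : 𝔻 → ℂ` are holomorphic with `A` nowhere vanishing. -/
theorem automorphism_of_disc_times_plane (F G : ℂ × ℂ → ℂ × ℂ)
    (hF : DifferentiableOn ℂ F (Metric.ball (0 : ℂ) 1 ×ˢ (univ : Set ℂ)))
    (hFmaps : MapsTo F (Metric.ball (0 : ℂ) 1 ×ˢ (univ : Set ℂ))
      (Metric.ball (0 : ℂ) 1 ×ˢ (univ : Set ℂ)))
    (hG : DifferentiableOn ℂ G (Metric.ball (0 : ℂ) 1 ×ˢ (univ : Set ℂ)))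
    (hGmaps : MapsTo G (Metric.ball (0 : ℂ) 1 ×ˢ (univ : Set ℂ))
      (Metric.ball (0 : ℂ) 1 ×ˢ (univ : Set ℂ)))
    (hGF : ∀ p ∈ Metric.ball (0 : ℂ) 1 ×ˢ (univ : Set ℂ), G (F p) = p)
    (hFG : ∀ p ∈ Metric.ball (0 : ℂ) 1 ×ˢ (univ : Set ℂ), F (G p) = p) :
    ∃ ψ A B : ℂ → ℂ,
      DifferentiableOn ℂ ψ (Metric.ball (0 : ℂ) 1) ∧
      MapsTo ψ (Metric.ball (0 : ℂ) 1) (Metric.ball (0 : ℂ) 1) ∧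
      (∃ ψ' : ℂ → ℂ, DifferentiableOn ℂ ψ' (Metric.ball (0 : ℂ) 1) ∧
        MapsTo ψ' (Metric.ball (0 : ℂ) 1) (Metric.ball (0 : ℂ) 1) ∧
        (∀ z ∈ Metric.ball (0 : ℂ) 1, ψ' (ψ z) = z) ∧
        (∀ z ∈ Metric.ball (0 : ℂ) 1, ψ (ψ' z) = z)) ∧
      DifferentiableOn ℂ A (Metric.ball (0 : ℂ) 1) ∧
      DifferentiableOn ℂ B (Metric.ball (0 : ℂ) 1) ∧
      (∀ z ∈ Metric.ball (0 : ℂ) 1, A z ≠ 0) ∧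
      (∀ p ∈ Metric.ball (0 : ℂ) 1 ×ˢ (univ : Set ℂ),
        F p = (ψ p.1, A p.1 * p.2 + B p.1)) := by
  have hD : IsOpen (ball (0 : ℂ) 1) := isOpen_ball
  have hF_fst z (hz : z ∈ ball (0 : ℂ) 1) w : (F (z, w)).1 = (F (z, 0)).1 :=
    hF.fst_apply_mk_eq hD isBounded_ball hFmaps hz w 0
  have hG_fst z (hz : z ∈ ball (0 : ℂ) 1) w : (G (z, w)).1 = (G (z, 0)).1 :=
    hG.fst_apply_mk_eq hD isBounded_ball hGmaps hz w 0
  have hψ_mem z (hz : z ∈ ball (0 : ℂ) 1) : (F (z, 0)).1 ∈ ball 0 1 := (hFmaps ⟨hz, trivial⟩).1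
  have hψ'_mem z (hz : z ∈ ball (0 : ℂ) 1) : (G (z, 0)).1 ∈ ball 0 1 := (hGmaps ⟨hz, trivial⟩).1
  have hψ'ψ z (hz : z ∈ ball (0 : ℂ) 1) : (G ((F (z, 0)).1, 0)).1 = z := by
    rw [← hG_fst _ (hψ_mem z hz) (F (z, 0)).2, hGF _ ⟨hz, trivial⟩]
  have hψψ' z (hz : z ∈ ball (0 : ℂ) 1) : (F ((G (z, 0)).1, 0)).1 = z := by
    rw [← hF_fst _ (hψ'_mem z hz) (G (z, 0)).2, hFG _ ⟨hz, trivial⟩]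
  have h_snd z (hz : z ∈ ball (0 : ℂ) 1) :=
    snd_apply_mk_eq_mul_add_of_fiber_inverse
      (hF.differentiable_apply_mk hD hz) (hG.differentiable_apply_mk hD (hψ_mem z hz))
      (hF_fst z hz) (fun w => (hG_fst _ (hψ_mem z hz) w).trans (hψ'ψ z hz))
      (fun w => hGF _ ⟨hz, trivial⟩) (fun w => hFG _ ⟨hψ_mem z hz, trivial⟩)
  refine ⟨fun z => (F (z, 0)).1, fun z => (F (z, 1)).2 - (F (z, 0)).2, fun z => (F (z, 0)).2,
    (hF.differentiableOn_apply_mk hD 0).fst, hψ_mem,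
    ⟨fun z => (G (z, 0)).1, (hG.differentiableOn_apply_mk hD 0).fst, hψ'_mem, hψ'ψ, hψψ'⟩,
    (hF.differentiableOn_apply_mk hD 1).snd.sub (hF.differentiableOn_apply_mk hD 0).snd,
    (hF.differentiableOn_apply_mk hD 0).snd,
    fun z hz => (h_snd z hz).1, fun ⟨z, w⟩ ⟨hz, _⟩ => Prod.ext (hF_fst z hz w) ((h_snd z hz).2 w)⟩
end
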